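/- arXiv:2404.00900 — 3 statements merged into one kernel-verified Lean document; each statement's English description precedes it below -/
import Mathlib

section
/- Let (T, η, μ) be a monad on B such that η_X is an equaliser of T(η_X) and η_{T X} for every X. Then the comparison functor K : B → (B^T)^{T̄} (sending X to ((T X, μ_X), T η_X)) is fully faithful. -/
open CategoryTheory Limits

/-- Let `(T, η, μ)` be a monad on `B` such that `η_X` is an equaliser of `T(η_X)` and
`η_{T X}` for every `X`. Then the comparison functor `K : B ⥤ (B^T)^{T̄}` (sending `X` to
`((T X, μ_X), T η_X)`) is fully faithful: for every `h : T X ⟶ T Y` which is a morphism of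
algebras commuting with the coalgebra structure maps, there is a unique `f : X ⟶ Y` in `B`
with `T f = h`. -/
theorem comparison_fully_faithful_of_equaliser {B : Type*} [Category B] (T : Monad B)
    (heq : ∀ X : B, Nonempty (IsLimit (Fork.ofι (T.η.app X)
      (by simpa using (T.η.naturality (T.η.app X)).symm :
        T.η.app X ≫ T.map (T.η.app X) = T.η.app X ≫ T.η.app (T.obj X)))))
    {X Y : B} (h : T.obj X ⟶ T.obj Y)
    (halg : T.map h ≫ T.μ.app Y = T.μ.app X ≫ h)
    (hcoalg : h ≫ T.map (T.η.app Y) = T.map (T.η.app X) ≫ T.map h) :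
    ∃! f : X ⟶ Y, T.map f = h := by
  obtain ⟨hY⟩ := heq Y
  have e1 : T.η.app X ≫ T.map (T.η.app X) = T.η.app X ≫ T.η.app (T.obj X) := by
    simpa using (T.η.naturality (T.η.app X)).symm
  have hcond : (T.η.app X ≫ h) ≫ T.map (T.η.app Y) =
      (T.η.app X ≫ h) ≫ T.η.app (T.obj Y) := by
    rw [Category.assoc, hcoalg, ← Category.assoc, e1, Category.assoc,
      Category.assoc, ← T.η.naturality h]; rfl
  let c : Fork (T.map (T.η.app Y)) (T.η.app (T.obj Y)) := Fork.ofι (T.η.app X ≫ h) hcond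
  have hlift : hY.lift c ≫ T.η.app Y = T.η.app X ≫ h := hY.fac c WalkingParallelPair.zero
  refine ⟨hY.lift c, ?_, ?_⟩
  · have h1 : T.map (hY.lift c) ≫ T.map (T.η.app Y) = h ≫ T.map (T.η.app Y) := by
      rw [← T.map_comp, hlift, T.map_comp, hcoalg]
    calc T.map (hY.lift c)
        = T.map (hY.lift c) ≫ T.map (T.η.app Y) ≫ T.μ.app Y := by simp
      _ = h ≫ T.map (T.η.app Y) ≫ T.μ.app Y := by rw [← Category.assoc, h1, Category.assoc]
      _ = h := by simp
  · intro f hf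
    apply Fork.IsLimit.hom_ext hY
    rw [Fork.ι_ofι, hlift, ← hf, ← T.η.naturality f]
    rfl
end

section
/- Let (A, S) and (B, T) be monads, and let G̅ : A_S → B_T be a functor between Kleisli categories with G : A → B satisfying G̅ ∘ F_S = F_T ∘ G (a co-morphism of monads). If f : X → Y is a thunkable morphism of A_S (i.e. S(η^S_Y) ∘ f = η^S_{S Y} ∘ f as a Kleisli morphism f : X → S Y, where thunkability is expressed via the canonical abstract Kleisli structures), then G̅ f is a thunkable morphism of B_T. -/
/-!
Call a Kleisli morphism pure if it lies in the image of the free functor `F_T`. A Kleisli morphism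
`g : X ⟶ Y` is thunkable iff `g ≫ a` is pure for some pure `a : Y ⟶ Z` admitting a retraction
`d : Z ⟶ Y`. For the forward direction take `a = F_T η_Y`, retracted by the identity of `T Y` read
as a Kleisli morphism `T Y ⟶ Y`. Conversely, writing `a = F_T a₀`, `g ≫ a = F_T b₀` and `g₀`, `d₀`
for the underlying morphisms,
`g₀ ≫ T η = g₀ ≫ T a₀ ≫ T d₀ = b₀ ≫ η ≫ T d₀ = b₀ ≫ d₀ ≫ η = g₀ ≫ η`.
The characterization only involves composition, identities and purity, and a functor `G̅` with
`F_S ⋙ G̅ = G ⋙ F_T` preserves all three.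
-/

open CategoryTheory

/-- The morphism of the base category underlying a Kleisli morphism. -/
def kleisliHom {A : Type*} [Category A] {S : Monad A} {X Y : Kleisli S} (f : X ⟶ Y) :
    @Quiver.Hom A _ X.of (S.obj Y.of) := f.of

namespace CategoryTheory.Kleisli

section

variable {B : Type*} [Category B] {T : Monad B}

def IsPure {U V : Kleisli T} (h : U ⟶ V) : Prop :=
  ∃ h₀ : U.of ⟶ V.of, h.of = h₀ ≫ T.η.app V.of

def IsThunkable {X Y : Kleisli T} (g : X ⟶ Y) : Prop :=
  kleisliHom g ≫ T.map (T.η.app Y.of) = kleisliHom g ≫ T.η.app (T.obj Y.of)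

lemma isPure_toKleisli_map {U V : B} (h₀ : U ⟶ V) :
    IsPure ((Adjunction.toKleisli T).map h₀) :=
  ⟨h₀, rfl⟩

lemma isPure_eqToHom {U V : Kleisli T} (e : U = V) : IsPure (eqToHom e) := by
  cases e
  exact ⟨𝟙 _, by simp⟩

lemma IsPure.comp {U V W : Kleisli T} {h : U ⟶ V} {k : V ⟶ W} (hh : IsPure h) (hk : IsPure k) :
    IsPure (h ≫ k) := by
  obtain ⟨h₀, hh⟩ := hh
  obtain ⟨k₀, hk⟩ := hk
  exact ⟨h₀ ≫ k₀, by
    simp only [category_comp_of, hh, hk, T.map_comp, Category.assoc, ← T.unit_naturality_assoc,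
      T.left_unit, Functor.id_obj, Category.comp_id]⟩

lemma IsThunkable.isPure_comp_toKleisli_map_unit {X Y : Kleisli T} {g : X ⟶ Y}
    (hg : IsThunkable g) :
    IsPure (g ≫ (Adjunction.toKleisli T).map (T.η.app Y.of)) :=
  ⟨g.of, by
    have hg : g.of ≫ T.map (T.η.app Y.of) = g.of ≫ T.η.app (T.obj Y.of) := hg
    change g.of ≫ T.map (T.η.app Y.of ≫ T.η.app _) ≫ T.μ.app _ = g.of ≫ T.η.app _
    simp [hg]⟩

lemma toKleisli_map_unit_comp_counit (Y : Kleisli T) :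
    (Adjunction.toKleisli T).map (T.η.app Y.of) ≫ (⟨𝟙 (T.obj Y.of)⟩ : mk T (T.obj Y.of) ⟶ Y) =
      𝟙 Y := by
  ext
  change (T.η.app Y.of ≫ T.η.app _) ≫ T.map (𝟙 _) ≫ T.μ.app Y.of = T.η.app Y.of
  simp

lemma isThunkable_of_isPure_comp_section {X Y Z : Kleisli T} {g : X ⟶ Y} {a : Y ⟶ Z}
    {d : Z ⟶ Y} (ha : IsPure a) (had : a ≫ d = 𝟙 Y) (hga : IsPure (g ≫ a)) : IsThunkable g := by
  obtain ⟨a₀, ha⟩ := ha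
  obtain ⟨b₀, hb⟩ := hga
  have hbd : b₀ ≫ d.of = g.of := by
    have h := congrArg Hom.of (show (g ≫ a) ≫ d = g by rw [Category.assoc, had, Category.comp_id])
    rw [category_comp_of, hb] at h
    simpa [← T.unit_naturality_assoc] using h
  have hga₀ : g.of ≫ T.map a₀ = b₀ ≫ T.η.app Z.of := by
    simpa [ha, ← T.map_comp_assoc] using hb
  have had₀ : a₀ ≫ d.of = T.η.app Y.of := by
    simpa [ha, ← T.unit_naturality_assoc] using congrArg Hom.of had
  unfold IsThunkable kleisliHom
  calc g.of ≫ T.map (T.η.app Y.of) = g.of ≫ T.map a₀ ≫ T.map d.of := by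
        rw [← T.map_comp, had₀]
    _ = b₀ ≫ d.of ≫ T.η.app (T.obj Y.of) := by
        rw [reassoc_of% hga₀, T.unit_naturality]
    _ = g.of ≫ T.η.app (T.obj Y.of) := by rw [reassoc_of% hbd]

theorem isThunkable_iff_exists_isPure_comp_section {X Y : Kleisli T} (g : X ⟶ Y) :
    IsThunkable g ↔
      ∃ (Z : Kleisli T) (a : Y ⟶ Z) (d : Z ⟶ Y), IsPure a ∧ a ≫ d = 𝟙 Y ∧ IsPure (g ≫ a) :=
  ⟨fun hg => ⟨_, _, _, isPure_toKleisli_map _, toKleisli_map_unit_comp_counit Y,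
      hg.isPure_comp_toKleisli_map_unit⟩,
    fun ⟨_, _, _, ha, had, hga⟩ => isThunkable_of_isPure_comp_section ha had hga⟩

end

lemma IsPure.map_of_toKleisli_comp_eq {A B : Type*} [Category A] [Category B] {S : Monad A}
    {T : Monad B} {G : A ⥤ B} {Gbar : Kleisli S ⥤ Kleisli T}
    (hcomm : Adjunction.toKleisli S ⋙ Gbar = G ⋙ Adjunction.toKleisli T)
    {U V : Kleisli S} {h : U ⟶ V} (hh : IsPure h) : IsPure (Gbar.map h) := by
  obtain ⟨h₀, hh⟩ := hh
  obtain rfl : h = (Adjunction.toKleisli S).map h₀ := hom_ext hh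
  have hmap := Functor.congr_hom hcomm h₀
  rw [Functor.comp_map, Functor.comp_map] at hmap
  exact (congrArg IsPure hmap).mpr
    ((isPure_eqToHom _).comp ((isPure_toKleisli_map _).comp (isPure_eqToHom _)))

end CategoryTheory.Kleisli

/-- Let `(A, S)` and `(B, T)` be monads and `(G, G̅)` a co-morphism of monads, i.e. a functor
`G̅ : A_S ⥤ B_T` between the Kleisli categories and `G : A ⥤ B` with `G̅ ∘ F_S = F_T ∘ G`.
If `f : X ⟶ Y` is a thunkable morphism of `A_S` (i.e. `S(η^S_Y) ∘ f = η^S_{S Y} ∘ f` for the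
underlying `f : X ⟶ S Y`, which expresses thunkability for the canonical abstract Kleisli
structures), then `G̅ f` is a thunkable morphism of `B_T`. -/
theorem comorphism_preserves_thunkable {A B : Type*} [Category A] [Category B]
    (S : Monad A) (T : Monad B) (G : A ⥤ B) (Gbar : Kleisli S ⥤ Kleisli T)
    (hcomm : Kleisli.Adjunction.toKleisli S ⋙ Gbar = G ⋙ Kleisli.Adjunction.toKleisli T)
    {X Y : Kleisli S} (f : X ⟶ Y)
    (hf : kleisliHom f ≫ S.map (S.η.app Y.of) = kleisliHom f ≫ S.η.app (S.obj Y.of)) :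
    kleisliHom (Gbar.map f) ≫ T.map (T.η.app (Gbar.obj Y).of) =
      kleisliHom (Gbar.map f) ≫ T.η.app (T.obj (Gbar.obj Y).of) := by
  obtain ⟨Z, a, d, ha, had, hfa⟩ := (Kleisli.isThunkable_iff_exists_isPure_comp_section f).mp hf
  refine (Kleisli.isThunkable_iff_exists_isPure_comp_section (Gbar.map f)).mpr
    ⟨Gbar.obj Z, Gbar.map a, Gbar.map d, ha.map_of_toKleisli_comp_eq hcomm, ?_, ?_⟩
  · rw [← Gbar.map_comp, had, Gbar.map_id]
  · rw [← Gbar.map_comp]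
    exact hfa.map_of_toKleisli_comp_eq hcomm
end

section
/- Let (T, η, μ) be a monad on B with η_Y an equaliser of T(η_Y) and η_{T Y} for all Y; then the functor J : B → (B_T)_θ into the category of thunkable Kleisli morphisms (J g = η ∘ g) is an isomorphism of categories: it is bijective on objects and bijective on hom-sets. -/
open CategoryTheory Limits

/-- Let `(T, η, μ)` be a monad on `B` such that `η_Y` is an equaliser of `T(η_Y)` and
`η_{T Y}` for all `Y`. Then the functor `J : B ⥤ (B_T)_θ` into the category of thunkable
Kleisli morphisms (which is identity on objects and sends `g : X ⟶ Y` to `η_Y ∘ g`) is an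
isomorphism of categories: it is bijective on objects (it is the identity there) and
bijective on hom-sets, i.e. for all `X Y` the map `g ↦ η_Y ∘ g` is a bijection from
`X ⟶ Y` in `B` to the thunkable Kleisli morphisms `X ⟶ T Y`. -/
theorem J_isomorphism_of_equaliser {B : Type*} [Category B] (T : Monad B)
    (heq : ∀ Y : B, Nonempty (IsLimit (Fork.ofι (T.η.app Y)
      (by simpa using (T.η.naturality (T.η.app Y)).symm :
        T.η.app Y ≫ T.map (T.η.app Y) = T.η.app Y ≫ T.η.app (T.obj Y)))))
    (X Y : B) :
    Function.Bijective (fun g : X ⟶ Y =>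
      (⟨g ≫ T.η.app Y, by
          rw [Category.assoc, Category.assoc]
          congr 1
          simpa using (T.η.naturality (T.η.app Y)).symm⟩ :
        {f : X ⟶ T.obj Y // f ≫ T.map (T.η.app Y) = f ≫ T.η.app (T.obj Y)})) := by
  obtain ⟨h⟩ := heq Y
  have hmono : Mono (T.η.app Y) := by
    constructor
    intro Z a b hab
    exact Fork.IsLimit.hom_ext h (by simpa using hab)
  constructor
  · intro g₁ g₂ hg
    have := congrArg Subtype.val hg
    simp only at this
    exact (cancel_mono (T.η.app Y)).mp this
  · rintro ⟨f, hf⟩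
    refine ⟨h.lift (Fork.ofι f hf), ?_⟩
    ext
    exact h.fac (Fork.ofι f hf) WalkingParallelPair.zero
end
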